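/- For n ≥ 1, the number of overpartitions π of n that contain at least one overlined part and for which the number of non-overlined parts of size strictly greater than the smallest overlined part is even, minus the number of such overpartitions for which that count is odd, equals p(n), the number of ordinary partitions of n. -/

import Mathlib

open scoped Classical

/-- An overpartition of `n`: a finite set of overlined part sizes (the first
occurrence of a size may be overlined, so overlined parts are distinct)
together with a multiset of non-overlined parts, all parts positive,
with total sum `n`. -/
structure Overpartition (n : ℕ) where
  overlined : Finset ℕ
  plain : Multiset ℕ
  over_pos : ∀ x ∈ overlined, 0 < x
  plain_pos : ∀ x ∈ plain, 0 < x
  sum_eq : (∑ x ∈ overlined, x) + plain.sum = n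

/-!
For an overpartition with an overlined part, let `L` be its largest part. If some overlined part
is smaller than `L`, toggle the overline on `L`. This keeps the multiset of part sizes, hence `L`,
and keeps the smallest overlined part, which lies below `L`; so the only change to `ℓ_{N>O}` is
that the copy of `L` enters or leaves the non-overlined parts, and the parity flips. The toggle is
therefore a sign-reversing involution. Its fixed points are the overpartitions whose only
overlined part is the largest part; they have `ℓ_{N>O} = 0`, and forgetting the overline
identifies them with the partitions of `n`.
-/

theorem Multiset.sup_mem_of_ne_zero {α : Type*} [LinearOrder α] [OrderBot α] {s : Multiset α}
    (hs : s ≠ 0) : s.sup ∈ s := by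
  induction s using Multiset.induction_on with
  | empty => exact absurd rfl hs
  | cons a s ih =>
    rw [Multiset.sup_cons]
    rcases eq_or_ne s 0 with rfl | hs'
    · simp
    · rcases le_total a s.sup with h | h
      · rw [sup_eq_right.2 h]; exact Multiset.mem_cons_of_mem (ih hs')
      · rw [sup_eq_left.2 h]; exact Multiset.mem_cons_self a s

open Finset in
theorem Nat.card_even_sub_card_odd_eq_card_of_involution {α : Type*} [Finite α] {s p : α → Prop}
    (ℓ : α → ℕ) (g : α → α) (hp : ∀ a, s a → p a → Even (ℓ a))
    (hg_mem : ∀ a, s a → ¬p a → s (g a) ∧ ¬p (g a)) (hg_inv : ∀ a, s a → ¬p a → g (g a) = a)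
    (hg_flip : ∀ a, s a → ¬p a → (Even (ℓ (g a)) ↔ ¬Even (ℓ a))) :
    (Nat.card {a // s a ∧ Even (ℓ a)} : ℤ) - Nat.card {a // s a ∧ Odd (ℓ a)} =
      Nat.card {a // s a ∧ p a} := by
  have := Fintype.ofFinite α
  simp only [Nat.card_eq_fintype_card, Fintype.card_subtype, ← filter_filter]
  set S := univ.filter s
  have h_signed : ∑ a ∈ S, (-1 : ℤ) ^ ℓ a =
      #(S.filter fun a => Even (ℓ a)) - #(S.filter fun a => Odd (ℓ a)) := by
    rw [← sum_filter_add_sum_filter_not S fun a => Even (ℓ a),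
      sum_congr rfl fun a ha => (mem_filter.1 ha).2.neg_one_pow,
      sum_congr rfl fun a ha => (Nat.not_even_iff_odd.1 (mem_filter.1 ha).2).neg_one_pow]
    simp [sub_eq_add_neg]
  have h_cancel : ∑ a ∈ S.filter (¬p ·), (-1 : ℤ) ^ ℓ a = 0 := by
    have hS : ∀ {a}, a ∈ S.filter (¬p ·) → s a ∧ ¬p a := by simp [S]
    refine sum_involution (fun a _ => g a) (fun a ha => ?_) (fun a ha _ hfix => ?_)
      (fun a ha => by simpa [S] using hg_mem a (hS ha).1 (hS ha).2)
      (fun a ha => hg_inv a (hS ha).1 (hS ha).2)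
    · simp only [neg_one_pow_eq_ite, hg_flip a (hS ha).1 (hS ha).2]
      split_ifs <;> norm_num
    · have hflip := hg_flip a (hS ha).1 (hS ha).2
      rw [hfix] at hflip
      exact iff_not_self hflip
  have h_fixed : ∑ a ∈ S.filter p, (-1 : ℤ) ^ ℓ a = #(S.filter p) := by
    rw [card_eq_sum_ones, Nat.cast_sum]
    exact sum_congr rfl fun a ha => by
      simp only [S, mem_filter] at ha
      simp [(hp a ha.1.2 ha.2).neg_one_pow]
  rw [← h_signed, ← sum_filter_add_sum_filter_not S p, h_cancel, h_fixed, add_zero]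

namespace Overpartition

variable {n : ℕ}

def toPartition (π : Overpartition n) : Nat.Partition n where
  parts := π.overlined.val + π.plain
  parts_pos hi := (Multiset.mem_add.1 hi).elim (π.over_pos _) (π.plain_pos _)
  parts_sum := by
    rw [Multiset.sum_add, ← Multiset.map_id' π.overlined.val, ← Finset.sum_eq_multiset_sum]
    exact π.sum_eq

theorem mem_toPartition_parts {π : Overpartition n} {x : ℕ} :
    x ∈ π.toPartition.parts ↔ x ∈ π.overlined ∨ x ∈ π.plain :=
  Multiset.mem_add

theorem ext_of_toPartition {π τ : Overpartition n} (h : π.toPartition = τ.toPartition)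
    (hO : π.overlined = τ.overlined) : π = τ := by
  have hP : π.plain = τ.plain := by
    have := congrArg Nat.Partition.parts h
    simp only [toPartition, hO] at this
    exact (add_right_inj _).1 this
  cases π; cases τ
  simp_all

instance : Finite (Overpartition n) :=
  Finite.of_injective
    (fun π => (π.toPartition, (⟨π.overlined, Finset.mem_powerset.2 fun _ hx =>
      Finset.mem_range_succ_iff.2 <| Nat.Partition.le_of_mem_parts <|
        mem_toPartition_parts.2 (.inl hx)⟩ : (Finset.range (n + 1)).powerset)))
    fun _ _ h => ext_of_toPartition (Prod.ext_iff.1 h).1 (Subtype.ext_iff.1 (Prod.ext_iff.1 h).2)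

@[simps]
def unoverline (π : Overpartition n) (m : ℕ) (hm : m ∈ π.overlined) : Overpartition n where
  overlined := π.overlined.erase m
  plain := m ::ₘ π.plain
  over_pos x hx := π.over_pos x (Finset.mem_of_mem_erase hx)
  plain_pos x hx := (Multiset.mem_cons.1 hx).elim (· ▸ π.over_pos m hm) (π.plain_pos x)
  sum_eq := by
    rw [Multiset.sum_cons]
    linarith [π.sum_eq, Finset.sum_erase_add π.overlined (fun x => x) hm]

def overline (π : Overpartition n) (m : ℕ) (hm : m ∉ π.overlined) (hp : m ∈ π.plain) :
    Overpartition n where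
  overlined := insert m π.overlined
  plain := π.plain.erase m
  over_pos x hx := (Finset.mem_insert.1 hx).elim (· ▸ π.plain_pos m hp) (π.over_pos x)
  plain_pos x hx := π.plain_pos x (Multiset.mem_of_mem_erase hx)
  sum_eq := by
    rw [Finset.sum_insert hm]
    linarith [π.sum_eq, Multiset.sum_erase hp]

def toggle (π : Overpartition n) (m : ℕ) : Overpartition n :=
  if hO : m ∈ π.overlined then π.unoverline m hO
  else if hP : m ∈ π.plain then π.overline m hO hP
  else π

theorem toggle_of_mem_overlined {π : Overpartition n} {m : ℕ} (hO : m ∈ π.overlined) :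
    π.toggle m = π.unoverline m hO :=
  dif_pos hO

theorem toggle_of_mem_plain {π : Overpartition n} {m : ℕ} (hO : m ∉ π.overlined)
    (hP : m ∈ π.plain) : π.toggle m = π.overline m hO hP := by
  rw [toggle, dif_neg hO, dif_pos hP]

theorem toPartition_toggle (π : Overpartition n) (m : ℕ) :
    (π.toggle m).toPartition = π.toPartition := by
  by_cases hO : m ∈ π.overlined
  · rw [toggle_of_mem_overlined hO]
    ext1
    simp only [toPartition, unoverline, Finset.erase_val, Multiset.add_cons, ← Multiset.cons_add,
      Multiset.cons_erase hO]
  by_cases hP : m ∈ π.plain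
  · rw [toggle_of_mem_plain hO hP]
    ext1
    simp only [toPartition, overline, Finset.insert_val_of_notMem hO, Multiset.cons_add,
      ← Multiset.add_cons, Multiset.cons_erase hP]
  · simp [toggle, hO, hP]

theorem toggle_toggle (π : Overpartition n) (m : ℕ) : (π.toggle m).toggle m = π := by
  refine ext_of_toPartition (by rw [toPartition_toggle, toPartition_toggle]) ?_
  by_cases hO : m ∈ π.overlined
  · rw [toggle_of_mem_overlined hO, toggle_of_mem_plain (Finset.notMem_erase m _)
      (Multiset.mem_cons_self m _)]
    exact Finset.insert_erase hO
  by_cases hP : m ∈ π.plain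
  · rw [toggle_of_mem_plain hO hP, toggle_of_mem_overlined (Finset.mem_insert_self m _)]
    exact Finset.erase_insert hO
  · simp [toggle, hO, hP]

theorem mem_overlined_toggle_of_ne {π : Overpartition n} {m y : ℕ} (h : y ≠ m) :
    y ∈ (π.toggle m).overlined ↔ y ∈ π.overlined := by
  unfold toggle
  split_ifs <;> simp [unoverline, overline, h]

def largest (π : Overpartition n) : ℕ :=
  π.toPartition.parts.sup

theorem le_largest {π : Overpartition n} {x : ℕ} (hx : x ∈ π.overlined ∨ x ∈ π.plain) :
    x ≤ π.largest :=
  Multiset.le_sup (mem_toPartition_parts.2 hx)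

theorem largest_mem (π : Overpartition n) (h : π.overlined.Nonempty) :
    π.largest ∈ π.overlined ∨ π.largest ∈ π.plain := by
  refine mem_toPartition_parts.1 (Multiset.sup_mem_of_ne_zero ?_)
  obtain ⟨y, hy⟩ := h
  exact ne_of_mem_of_not_mem' (mem_toPartition_parts.2 (.inl hy)) (Multiset.notMem_zero y)

theorem largest_toggle (π : Overpartition n) (m : ℕ) : (π.toggle m).largest = π.largest := by
  rw [largest, toPartition_toggle, largest]

/-- The paper's `ℓ_{N>O}`, when `π` has an overlined part. -/
def numPlainAbove (π : Overpartition n) : ℕ :=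
  Multiset.card (π.plain.filter (fun x => ∃ y ∈ π.overlined, y < x))

theorem numPlainAbove_eq_zero {π : Overpartition n} (h : ∀ y ∈ π.overlined, π.largest ≤ y) :
    π.numPlainAbove = 0 := by
  refine Multiset.card_eq_zero.2 (Multiset.filter_eq_nil.2 fun x hx ⟨y, hy, hyx⟩ => ?_)
  exact (hyx.trans_le (le_largest (.inr hx))).not_ge (h y hy)

theorem numPlainAbove_toggle_largest_of_mem_overlined {π : Overpartition n}
    (hO : π.largest ∈ π.overlined) (hlt : ∃ y ∈ π.overlined, y < π.largest) :
    (π.toggle π.largest).numPlainAbove = π.numPlainAbove + 1 := by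
  obtain ⟨y, hy, hyL⟩ := hlt
  rw [toggle_of_mem_overlined hO, numPlainAbove, numPlainAbove, unoverline_overlined,
    unoverline_plain, Multiset.filter_cons_of_pos _ ⟨y, Finset.mem_erase.2 ⟨hyL.ne, hy⟩, hyL⟩,
    Multiset.card_cons]
  congr 2
  refine Multiset.filter_congr fun x hx =>
    ⟨fun ⟨z, hz, hzx⟩ => ⟨z, Finset.mem_of_mem_erase hz, hzx⟩,
      fun ⟨z, hz, hzx⟩ => ⟨z, Finset.mem_erase.2 ⟨?_, hz⟩, hzx⟩⟩
  exact (hzx.trans_le (le_largest (.inr hx))).ne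

theorem exists_lt_largest_toggle_largest {π : Overpartition n}
    (hlt : ∃ y ∈ π.overlined, y < π.largest) :
    ∃ y ∈ (π.toggle π.largest).overlined, y < (π.toggle π.largest).largest := by
  obtain ⟨y, hy, hyL⟩ := hlt
  exact ⟨y, (mem_overlined_toggle_of_ne hyL.ne).2 hy, (largest_toggle π _).symm ▸ hyL⟩

theorem even_numPlainAbove_toggle_largest_iff {π : Overpartition n}
    (hlt : ∃ y ∈ π.overlined, y < π.largest) :
    Even (π.toggle π.largest).numPlainAbove ↔ ¬Even π.numPlainAbove := by
  by_cases hO : π.largest ∈ π.overlined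
  · rw [numPlainAbove_toggle_largest_of_mem_overlined hO hlt, Nat.even_add_one]
  -- Otherwise the toggle overlines the largest part, and toggling back is the case above.
  have hP := (π.largest_mem ⟨_, hlt.choose_spec.1⟩).resolve_left hO
  have hτO : (π.toggle π.largest).largest ∈ (π.toggle π.largest).overlined := by
    rw [largest_toggle, toggle_of_mem_plain hO hP]
    exact Finset.mem_insert_self _ _
  have h := numPlainAbove_toggle_largest_of_mem_overlined hτO (exists_lt_largest_toggle_largest hlt)
  rw [largest_toggle, toggle_toggle] at h
  rw [h, Nat.even_add_one, not_not]

theorem overlined_eq_singleton_largest {π : Overpartition n} (h : π.overlined.Nonempty)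
    (hfix : ∀ y ∈ π.overlined, π.largest ≤ y) : π.overlined = {π.largest} :=
  h.subset_singleton_iff.1 fun y hy =>
    Finset.mem_singleton.2 (le_antisymm (le_largest (.inl hy)) (hfix y hy))

def ofPartition (p : Nat.Partition n) : Overpartition n where
  overlined := ∅
  plain := p.parts
  over_pos := by simp
  plain_pos _ := p.parts_pos
  sum_eq := by simpa using p.parts_sum

theorem toPartition_ofPartition (p : Nat.Partition n) : (ofPartition p).toPartition = p := by
  ext1
  simp [toPartition, ofPartition]

theorem bijective_toPartition_of_overlined_largest (hn : n ≠ 0) :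
    Function.Bijective fun π : {π : Overpartition n //
      π.overlined.Nonempty ∧ ∀ y ∈ π.overlined, π.largest ≤ y} => π.1.toPartition := by
  constructor
  · rintro ⟨π, hπ, hπfix⟩ ⟨τ, hτ, hτfix⟩ (h : π.toPartition = τ.toPartition)
    refine Subtype.ext (ext_of_toPartition h ?_)
    rw [overlined_eq_singleton_largest hπ hπfix, overlined_eq_singleton_largest hτ hτfix,
      largest, largest, h]
  · intro p
    set π := ofPartition p
    have hL : π.largest = p.parts.sup := by rw [largest, toPartition_ofPartition]
    have hP : π.largest ∈ π.plain := by
      refine hL ▸ Multiset.sup_mem_of_ne_zero fun h0 => hn ?_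
      rw [← p.parts_sum, show p.parts = 0 from h0, Multiset.sum_zero]
    have hO : (π.toggle π.largest).overlined = {π.largest} := by
      have hO : π.largest ∉ π.overlined := Finset.notMem_empty _
      rw [toggle_of_mem_plain hO hP]
      rfl
    refine ⟨⟨π.toggle π.largest, ⟨_, hO ▸ Finset.mem_singleton_self _⟩, fun y hy => ?_⟩, ?_⟩
    · rw [hO, Finset.mem_singleton] at hy
      rw [hy, largest_toggle]
    · exact (toPartition_toggle π _).trans (toPartition_ofPartition p)

end Overpartition

open Overpartition in
theorem stmt_6 (n : ℕ) (hn : 1 ≤ n) :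
    (Nat.card {π : Overpartition n // π.overlined.Nonempty ∧
        Even (Multiset.card (π.plain.filter (fun x => ∃ y ∈ π.overlined, y < x)))} : ℤ) -
      Nat.card {π : Overpartition n // π.overlined.Nonempty ∧
        Odd (Multiset.card (π.plain.filter (fun x => ∃ y ∈ π.overlined, y < x)))} =
    Nat.card (Nat.Partition n) := by
  have hlt {π : Overpartition n} : ¬(∀ y ∈ π.overlined, π.largest ≤ y) ↔
      ∃ y ∈ π.overlined, y < π.largest := by
    simp only [not_forall, not_le, exists_prop]
  refine (Nat.card_even_sub_card_odd_eq_card_of_involution (s := fun π => π.overlined.Nonempty)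
    (p := fun π => ∀ y ∈ π.overlined, π.largest ≤ y) numPlainAbove (fun π => π.toggle π.largest)
    (fun π _ hfix => numPlainAbove_eq_zero hfix ▸ Even.zero) (fun π _ h => ?_)
    (fun π _ _ => by rw [largest_toggle, toggle_toggle])
    (fun π _ h => even_numPlainAbove_toggle_largest_iff (hlt.1 h))).trans ?_
  · obtain ⟨y, hy, hyL⟩ := exists_lt_largest_toggle_largest (hlt.1 h)
    exact ⟨⟨y, hy⟩, hlt.2 ⟨y, hy, hyL⟩⟩
  · exact congrArg _
      (Nat.card_eq_of_bijective _ (bijective_toPartition_of_overlined_largest (by omega)))
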